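/- arXiv:2101.02315 — 3 statements merged into one kernel-verified Lean document; each statement's English description precedes it below -/
import Mathlib

section
/- Let n ≥ 1 be an integer, s ∈ (0,1), and let Ω ⊂ ℝⁿ be a nonempty bounded open set whose boundary ∂Ω has Lebesgue measure zero. Let u : ℝⁿ → ℝ be measurable with u|_Ω ∈ L¹(Ω), and let ũ be the function equal to u on the closure of Ω and equal to E_u/E_1 on ℝⁿ\Ω̄. Then, with Q := ℝ²ⁿ \ ((ℝⁿ\Ω)×(ℝⁿ\Ω)), one has ∬_Q |ũ(x)−ũ(y)|²/|x−y|^{n+2s} dx dy ≤ ∬_Q |u(x)−u(y)|²/|x−y|^{n+2s} dx dy, as an inequality in [0,∞]. -/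
/-!
Off `closure Ω`, `ũ(y) = E_u(y) / E_1(y)` is the mean of `u` over `Ω` for the weight
`|x - y|^{-(n+2s)}`, so it minimizes `c ↦ ∫_Ω |u(x) - c|² |x - y|^{-(n+2s)} dx`.
The region `Q` splits into `Ω × Ω`, where `ũ = u`, and the two mirror-image strips
`Ω × Ωᶜ`, `Ωᶜ × Ω`; on a strip, integrating the minimality over `y ∈ Ωᶜ` (almost every such `y`
lies off `closure Ω`, as `∂Ω` is null) gives the inequality.
-/

open MeasureTheory Set
open scoped ENNReal

noncomputable section

abbrev Rn (n : ℕ) : Type := EuclideanSpace ℝ (Fin n)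

/-- The cross-shaped region `Q := ℝ²ⁿ \ ((ℝⁿ\Ω)×(ℝⁿ\Ω))`. -/
def QQ {n : ℕ} (Ω : Set (Rn n)) : Set (Rn n × Rn n) := ((Ωᶜ) ×ˢ (Ωᶜ))ᶜ

/-- The Gagliardo-type energy `∬_Q |u(x)-u(y)|²/|x-y|^{n+2s} dx dy`, valued in `[0,∞]`. -/
def gagEnergy (n : ℕ) (s : ℝ) (Ω : Set (Rn n)) (u : Rn n → ℝ) : ℝ≥0∞ :=
  ∫⁻ p in QQ Ω, ENNReal.ofReal (|u p.1 - u p.2| ^ 2 / ‖p.1 - p.2‖ ^ ((n : ℝ) + 2 * s))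

/-- `E_u(x) := ∫_Ω u(z)/|x-z|^{n+2s} dz`. -/
def Efun (n : ℕ) (s : ℝ) (Ω : Set (Rn n)) (u : Rn n → ℝ) (x : Rn n) : ℝ :=
  ∫ z in Ω, u z / ‖x - z‖ ^ ((n : ℝ) + 2 * s)

open Classical in
/-- `ũ`, equal to `u` on the closure of `Ω` and to `E_u/E_1` outside. -/
def tildeFun (n : ℕ) (s : ℝ) (Ω : Set (Rn n)) (u : Rn n → ℝ) (x : Rn n) : ℝ :=
  if x ∈ closure Ω then u x
  else Efun n s Ω u x / Efun n s Ω (fun _ => 1) x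

def weightedMean {X : Type*} [MeasurableSpace X] (μ : Measure X) (k v : X → ℝ) : ℝ :=
  (∫ x, v x / k x ∂μ) / ∫ x, 1 / k x ∂μ

theorem lintegral_sq_div_weightedMean_le {X : Type*} [MeasurableSpace X] {μ : Measure X}
    {k v : X → ℝ} (hk : ∀ᵐ x ∂μ, 0 < k x) (hk_int : Integrable (fun x => 1 / k x) μ)
    (hvk_int : Integrable (fun x => v x / k x) μ) (hk_pos : 0 < ∫ x, 1 / k x ∂μ)
    (hv : AEMeasurable v μ) (c : ℝ) :
    ∫⁻ x, ENNReal.ofReal ((v x - weightedMean μ k v) ^ 2 / k x) ∂μ ≤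
      ∫⁻ x, ENNReal.ofReal ((v x - c) ^ 2 / k x) ∂μ := by
  set m := weightedMean μ k v
  by_cases hfin : ∫⁻ x, ENNReal.ofReal ((v x - c) ^ 2 / k x) ∂μ = ∞
  · simp [hfin]
  have hnonneg (a : ℝ) : 0 ≤ᵐ[μ] fun x => (v x - a) ^ 2 / k x :=
    hk.mono fun x hx => div_nonneg (sq_nonneg _) hx.le
  have hc_int : Integrable (fun x => (v x - c) ^ 2 / k x) μ := by
    refine ⟨?_, (hasFiniteIntegral_iff_ofReal (hnonneg c)).2 (lt_top_iff_ne_top.2 hfin)⟩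
    exact (((hv.sub_const c).pow_const 2).mul hk_int.aemeasurable).aestronglyMeasurable.congr
      (ae_of_all _ fun x => mul_one_div _ _)
  have hexpand : (fun x => (v x - m) ^ 2 / k x) = fun x => (v x - c) ^ 2 / k x
      - 2 * (m - c) * (v x / k x) + (2 * (m - c) * c + (m - c) ^ 2) * (1 / k x) := by
    funext x; ring
  have hm_int : Integrable (fun x => (v x - m) ^ 2 / k x) μ := by
    rw [hexpand]
    exact (hc_int.sub (hvk_int.const_mul _)).add (hk_int.const_mul _)
  have hmean : ∫ x, v x / k x ∂μ = m * ∫ x, 1 / k x ∂μ := (div_mul_cancel₀ _ hk_pos.ne').symm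
  -- `∫ (v - m)² / k = ∫ (v - c)² / k - (m - c)² ∫ 1 / k`
  have hle : ∫ x, (v x - m) ^ 2 / k x ∂μ ≤ ∫ x, (v x - c) ^ 2 / k x ∂μ := by
    rw [hexpand, integral_add (f := fun x => (v x - c) ^ 2 / k x - 2 * (m - c) * (v x / k x))
      (hc_int.sub (hvk_int.const_mul _)) (hk_int.const_mul _),
      integral_sub (f := fun x => (v x - c) ^ 2 / k x) hc_int (hvk_int.const_mul _),
      integral_const_mul, integral_const_mul, hmean]
    nlinarith [mul_nonneg (sq_nonneg (m - c)) hk_pos.le]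
  calc ∫⁻ x, ENNReal.ofReal ((v x - m) ^ 2 / k x) ∂μ
      = ENNReal.ofReal (∫ x, (v x - m) ^ 2 / k x ∂μ) :=
        (ofReal_integral_eq_lintegral_ofReal hm_int (hnonneg m)).symm
    _ ≤ ENNReal.ofReal (∫ x, (v x - c) ^ 2 / k x ∂μ) := ENNReal.ofReal_le_ofReal hle
    _ = ∫⁻ x, ENNReal.ofReal ((v x - c) ^ 2 / k x) ∂μ :=
        ofReal_integral_eq_lintegral_ofReal hc_int (hnonneg c)

section DistanceKernel

variable {E : Type*} [NormedAddCommGroup E] {K Ω : Set E} {y : E}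

theorem norm_sub_pos_of_notMem (hy : y ∉ K) {z : E} (hz : z ∈ K) : 0 < ‖y - z‖ :=
  norm_pos_iff.2 (sub_ne_zero.2 fun h : y = z => hy (h ▸ hz))

theorem continuousOn_one_div_rpow_norm_sub (hy : y ∉ K) (p : ℝ) :
    ContinuousOn (fun z => 1 / ‖y - z‖ ^ p) K := fun _ hz =>
  (continuousAt_const.div
    ((continuousAt_const.sub continuousAt_id).norm.rpow_const
      (Or.inl (norm_sub_pos_of_notMem hy hz).ne'))
    (Real.rpow_pos_of_pos (norm_sub_pos_of_notMem hy hz) p).ne').continuousWithinAt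

variable [MeasurableSpace E] [OpensMeasurableSpace E] [ProperSpace E] {μ : Measure E}

theorem MeasureTheory.IntegrableOn.div_rpow_norm_sub {f : E → ℝ} (hf : IntegrableOn f Ω μ)
    (hΩ : MeasurableSet Ω) (hΩb : Bornology.IsBounded Ω) (hy : y ∉ closure Ω) (p : ℝ) :
    IntegrableOn (fun z => f z / ‖y - z‖ ^ p) Ω μ := by
  simpa only [div_eq_mul_one_div (f _)] using
    hf.mul_continuousOn_of_subset (continuousOn_one_div_rpow_norm_sub hy p) hΩ
      hΩb.isCompact_closure subset_closure

variable [IsFiniteMeasureOnCompacts μ]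

theorem integrableOn_one_div_rpow_norm_sub (hΩ : MeasurableSet Ω) (hΩb : Bornology.IsBounded Ω)
    (hy : y ∉ closure Ω) (p : ℝ) : IntegrableOn (fun z => 1 / ‖y - z‖ ^ p) Ω μ :=
  (integrableOn_const (C := (1 : ℝ)) hΩb.measure_lt_top.ne).div_rpow_norm_sub hΩ hΩb hy p

theorem setIntegral_one_div_rpow_norm_sub_pos [μ.IsOpenPosMeasure] (hΩne : Ω.Nonempty)
    (hΩo : IsOpen Ω) (hΩb : Bornology.IsBounded Ω) (hy : y ∉ closure Ω) (p : ℝ) :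
    0 < ∫ z in Ω, 1 / ‖y - z‖ ^ p ∂μ := by
  have hpos : ∀ z ∈ Ω, 0 < 1 / ‖y - z‖ ^ p := fun z hz =>
    one_div_pos.2 (Real.rpow_pos_of_pos (norm_sub_pos_of_notMem hy (subset_closure hz)) p)
  have hint := integrableOn_one_div_rpow_norm_sub (μ := μ) hΩo.measurableSet hΩb hy p
  have hsupp : Function.support (fun z => 1 / ‖y - z‖ ^ p) ∩ Ω = Ω :=
    inter_eq_right.2 fun z hz => (hpos z hz).ne'
  rw [setIntegral_pos_iff_support_of_nonneg_ae
    (ae_restrict_of_forall_mem hΩo.measurableSet fun z hz => (hpos z hz).le) hint, hsupp]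
  exact hΩo.measure_pos μ hΩne

end DistanceKernel

theorem ae_restrict_compl_notMem_closure {E : Type*} [TopologicalSpace E] [MeasurableSpace E]
    [OpensMeasurableSpace E] {μ : Measure E} {Ω : Set E} (hΩo : IsOpen Ω)
    (hfr : μ (frontier Ω) = 0) : ∀ᵐ y ∂μ.restrict Ωᶜ, y ∉ closure Ω := by
  filter_upwards [ae_restrict_of_ae (measure_eq_zero_iff_ae_notMem.1 hfr),
    ae_restrict_mem hΩo.measurableSet.compl] with y hyf hyc hcl
  exact hyf ⟨hcl, by rwa [hΩo.interior_eq]⟩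

section NeumannExtension

variable {n : ℕ} {s : ℝ} {Ω : Set (Rn n)} {u : Rn n → ℝ}

def gagIntegrand (n : ℕ) (s : ℝ) (f : Rn n → ℝ) (q : Rn n × Rn n) : ℝ≥0∞ :=
  ENNReal.ofReal (|f q.1 - f q.2| ^ 2 / ‖q.1 - q.2‖ ^ ((n : ℝ) + 2 * s))

theorem gagIntegrand_swap (f : Rn n → ℝ) (q : Rn n × Rn n) :
    gagIntegrand n s f q.swap = gagIntegrand n s f q := by
  rw [gagIntegrand, gagIntegrand, Prod.fst_swap, Prod.snd_swap, abs_sub_comm, norm_sub_rev]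

theorem measurable_gagIntegrand {f : Rn n → ℝ} (hf : Measurable f) :
    Measurable (gagIntegrand n s f) := by
  unfold gagIntegrand
  fun_prop

theorem gagEnergy_eq_add_two_mul {f : Rn n → ℝ} (hΩ : MeasurableSet Ω) (hf : Measurable f) :
    gagEnergy n s Ω f = (∫⁻ q in Ω ×ˢ Ω, gagIntegrand n s f q)
      + 2 * ∫⁻ y in Ωᶜ, ∫⁻ x in Ω, gagIntegrand n s f (x, y) := by
  have hQ : QQ Ω = Ω ×ˢ Ω ∪ (Ω ×ˢ Ωᶜ ∪ Ωᶜ ×ˢ Ω) := by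
    ext q
    simp only [QQ, mem_compl_iff, mem_prod, mem_union]
    tauto
  have hdisj : Disjoint (Ω ×ˢ Ω) (Ω ×ˢ Ωᶜ ∪ Ωᶜ ×ˢ Ω) :=
    disjoint_union_right.2 ⟨disjoint_compl_right.set_prod_right _ _,
      disjoint_compl_right.set_prod_left _ _⟩
  have hdisj' : Disjoint (Ω ×ˢ Ωᶜ) (Ωᶜ ×ˢ Ω) := disjoint_compl_right.set_prod_left _ _
  have hcross : ∫⁻ q in Ω ×ˢ Ωᶜ, gagIntegrand n s f q
      = ∫⁻ y in Ωᶜ, ∫⁻ x in Ω, gagIntegrand n s f (x, y) := by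
    rw [Measure.volume_eq_prod, ← Measure.prod_restrict,
      lintegral_prod_symm _ (measurable_gagIntegrand hf).aemeasurable]
  have hswap : ∫⁻ q in Ωᶜ ×ˢ Ω, gagIntegrand n s f q
      = ∫⁻ q in Ω ×ˢ Ωᶜ, gagIntegrand n s f q := by
    rw [Measure.volume_eq_prod, ← Measure.prod_restrict, ← Measure.prod_restrict,
      ← lintegral_prod_swap]
    simp only [gagIntegrand_swap]
  change ∫⁻ q in QQ Ω, gagIntegrand n s f q = _
  rw [hQ, lintegral_union ((hΩ.prod hΩ.compl).union (hΩ.compl.prod hΩ)) hdisj,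
    lintegral_union (hΩ.compl.prod hΩ) hdisj', hswap, ← two_mul, hcross]

theorem measurable_Efun {v : Rn n → ℝ} (hv : Measurable v) : Measurable (Efun n s Ω v) :=
  (((hv.comp measurable_snd).div ((measurable_fst.sub measurable_snd).norm.pow_const _))
    |>.stronglyMeasurable.integral_prod_right').measurable

theorem measurable_tildeFun (hu : Measurable u) : Measurable (tildeFun n s Ω u) :=
  Measurable.ite isClosed_closure.measurableSet hu
    ((measurable_Efun hu).div (measurable_Efun measurable_const))

theorem tildeFun_of_mem {x : Rn n} (hx : x ∈ Ω) : tildeFun n s Ω u x = u x :=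
  if_pos (subset_closure hx)

theorem tildeFun_of_notMem_closure {y : Rn n} (hy : y ∉ closure Ω) :
    tildeFun n s Ω u y =
      weightedMean (volume.restrict Ω) (fun z => ‖y - z‖ ^ ((n : ℝ) + 2 * s)) u :=
  if_neg hy

theorem lintegral_gagIntegrand_tildeFun_le (hΩne : Ω.Nonempty) (hΩo : IsOpen Ω)
    (hΩb : Bornology.IsBounded Ω) (hu : Measurable u) (hui : IntegrableOn u Ω) {y : Rn n}
    (hy : y ∉ closure Ω) :
    ∫⁻ x in Ω, gagIntegrand n s (tildeFun n s Ω u) (x, y) ≤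
      ∫⁻ x in Ω, gagIntegrand n s u (x, y) := by
  have hΩ := hΩo.measurableSet
  have hint (f : Rn n → ℝ) (hf : ∀ x ∈ Ω, f x = u x) :
      ∫⁻ x in Ω, gagIntegrand n s f (x, y)
        = ∫⁻ x in Ω, ENNReal.ofReal ((u x - f y) ^ 2 / ‖y - x‖ ^ ((n : ℝ) + 2 * s)) :=
    setLIntegral_congr_fun hΩ fun x hx => by rw [gagIntegrand, hf x hx, sq_abs, norm_sub_rev]
  rw [hint _ fun x => tildeFun_of_mem, hint u fun _ _ => rfl, tildeFun_of_notMem_closure hy]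
  exact lintegral_sq_div_weightedMean_le
    (ae_restrict_of_forall_mem hΩ fun z hz =>
      Real.rpow_pos_of_pos (norm_sub_pos_of_notMem hy (subset_closure hz)) _)
    (integrableOn_one_div_rpow_norm_sub hΩ hΩb hy _)
    (hui.div_rpow_norm_sub hΩ hΩb hy _)
    (setIntegral_one_div_rpow_norm_sub_pos hΩne hΩo hΩb hy _) hu.aemeasurable (u y)

end NeumannExtension

theorem statement0_general {n : ℕ} {s : ℝ}
    {Ω : Set (Rn n)} (hΩne : Ω.Nonempty) (hΩo : IsOpen Ω)
    (hΩb : Bornology.IsBounded Ω) (hfr : volume (frontier Ω) = 0)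
    {u : Rn n → ℝ} (hu : Measurable u) (hui : IntegrableOn u Ω) :
    gagEnergy n s Ω (tildeFun n s Ω u) ≤ gagEnergy n s Ω u := by
  have hΩ := hΩo.measurableSet
  rw [gagEnergy_eq_add_two_mul hΩ (measurable_tildeFun hu), gagEnergy_eq_add_two_mul hΩ hu]
  gcongr ?_ + 2 * ?_
  · refine (setLIntegral_congr_fun (hΩ.prod hΩ) fun q hq => ?_).le
    rw [gagIntegrand, tildeFun_of_mem hq.1, tildeFun_of_mem hq.2, gagIntegrand]
  · exact lintegral_mono_ae <| (ae_restrict_compl_notMem_closure hΩo hfr).mono fun y hy =>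
      lintegral_gagIntegrand_tildeFun_le hΩne hΩo hΩb hu hui hy

/-- the nonlocal-Neumann extension `ũ` has smaller Gagliardo energy. -/
theorem statement0 {n : ℕ} (hn : 1 ≤ n) {s : ℝ} (hs0 : 0 < s) (hs1 : s < 1)
    {Ω : Set (Rn n)} (hΩne : Ω.Nonempty) (hΩo : IsOpen Ω)
    (hΩb : Bornology.IsBounded Ω) (hfr : volume (frontier Ω) = 0)
    {u : Rn n → ℝ} (hu : Measurable u) (hui : IntegrableOn u Ω) :
    gagEnergy n s Ω (tildeFun n s Ω u) ≤ gagEnergy n s Ω u :=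
  statement0_general hΩne hΩo hΩb hfr hu hui
end
end

section
/- Assume the Setting, the definition of X_{α,β} and the solution Data given in the context, and suppose m ≤ −τ a.e. in Ω. If u ∈ X_{α,β} is a solution of the (α,β)-Neumann logistic problem −αΔu + β(−Δ)ˢu = (m − μu)u + τ J⋆u in Ω with u ≥ 0 a.e. in Ω, then u = 0 a.e. in Ω. -/
open MeasureTheory Set Filter
open scoped ENNReal Topology

noncomputable section

/-- The signed Gagliardo bilinear form on `Q`. -/
def gagForm (n : ℕ) (s : ℝ) (Ω : Set (Rn n)) (u v : Rn n → ℝ) : ℝ :=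
  ∫ p in QQ Ω, (u p.1 - u p.2) * (v p.1 - v p.2) / ‖p.1 - p.2‖ ^ ((n : ℝ) + 2 * s)

/-- `g` is a weak gradient of `u` on `Ω`. -/
def IsWeakGradOn {n : ℕ} (Ω : Set (Rn n)) (u : Rn n → ℝ) (g : Rn n → Rn n) : Prop :=
  ∀ φ : Rn n → ℝ, ContDiff ℝ (⊤ : ℕ∞) φ → HasCompactSupport φ → tsupport φ ⊆ Ω →
    ∀ i : Fin n,
      (∫ x in Ω, u x * fderiv ℝ φ x (EuclideanSpace.single i 1)) =
        - ∫ x in Ω, g x i * φ x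

/-- Membership in the space `X_{α,β}`, with `g` a choice of weak gradient (irrelevant
when `α = 0`). -/
structure MemX (n : ℕ) (s α β : ℝ) (Ω : Set (Rn n)) (u : Rn n → ℝ) (g : Rn n → Rn n) :
    Prop where
  meas : Measurable u
  l2 : MemLp u 2 (volume.restrict Ω)
  grad : α ≠ 0 → IsWeakGradOn Ω u g ∧ MemLp g 2 (volume.restrict Ω)
  gag : β ≠ 0 → gagEnergy n s Ω u ≠ ∞

/-- The squared seminorm `[u]²_{X_{α,β}}`. -/
def seminormSq (n : ℕ) (s α β : ℝ) (Ω : Set (Rn n)) (u : Rn n → ℝ) (g : Rn n → Rn n) : ℝ :=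
  α / 2 * (∫ x in Ω, ‖g x‖ ^ 2) + β / 4 * (gagEnergy n s Ω u).toReal

/-- The upper half unit ball `B₁ ∩ {xₙ > 0}`. -/
def halfBall (n : ℕ) : Set (Rn n) :=
  {x : Rn n | ‖x‖ < 1 ∧ ∀ h : n - 1 < n, 0 < x ⟨n - 1, h⟩}

/-- `A` is `C¹`-diffeomorphic to `B`. -/
def C1Diffeo {n : ℕ} (A B : Set (Rn n)) : Prop :=
  ∃ f g : Rn n → Rn n,
    ContDiffOn ℝ 1 f A ∧ ContDiffOn ℝ 1 g B ∧
    MapsTo f A B ∧ MapsTo g B A ∧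
    (∀ x ∈ A, g (f x) = x) ∧ (∀ y ∈ B, f (g y) = y)

/-- `Ω` has boundary of class `C¹`. -/
def HasC1Boundary {n : ℕ} (Ω : Set (Rn n)) : Prop :=
  ∃ R : ℝ, 0 < R ∧ ∃ P : Finset (Rn n), (↑P : Set (Rn n)) ⊆ frontier Ω ∧
    frontier Ω ⊆ ⋃ p ∈ P, Metric.ball p R ∧
    ∀ p ∈ P, C1Diffeo (Ω ∩ Metric.ball p R) (halfBall n)

/-- The standing assumptions on the domain `Ω`. -/
structure GoodDomain (n : ℕ) (β : ℝ) (Ω : Set (Rn n)) : Prop where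
  nonempty : Ω.Nonempty
  isOpen : IsOpen Ω
  bounded : Bornology.IsBounded Ω
  c1 : HasC1Boundary Ω
  conn : β = 0 → IsConnected Ω

/-- The exponent `q̲`. -/
def qlow (n : ℕ) (s β : ℝ) : ℝ :=
  if β = 0 then (if 2 < n then (n : ℝ) / 2 else 1)
  else (if 2 * s < (n : ℝ) then (n : ℝ) / (2 * s) else 1)

/-- The truncated convolution `(J⋆u)(x) = ∫_Ω J(x-y) u(y) dy`. -/
def Jconv {n : ℕ} (Ω : Set (Rn n)) (J u : Rn n → ℝ) (x : Rn n) : ℝ :=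
  ∫ y in Ω, J (x - y) * u y

/-- The standing assumptions on the data `m, μ, τ, J`. -/
structure GoodData (n : ℕ) (Ω : Set (Rn n)) (m μ : Rn n → ℝ) (τ : ℝ) (J : Rn n → ℝ) :
    Prop where
  m_meas : Measurable m
  mu_meas : Measurable μ
  mu_lb : ∃ mu0 : ℝ, 0 < mu0 ∧ ∀ᵐ x ∂volume.restrict Ω, mu0 ≤ μ x
  tau_nonneg : 0 ≤ τ
  J_int : Integrable J
  J_nonneg : ∀ᵐ x : Rn n ∂volume, 0 ≤ J x
  J_even : ∀ x : Rn n, J (-x) = J x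
  J_mass : (∫ x : Rn n, J x) = 1

/-- `u` (with weak gradient `gu`) is a weak solution of the `(α,β)`-Neumann logistic
problem `-αΔu + β(-Δ)ˢu = (m - μu)u + τ J⋆u` in `Ω`. -/
def IsSolution (n : ℕ) (s α β : ℝ) (Ω : Set (Rn n)) (m μ : Rn n → ℝ) (τ : ℝ)
    (J : Rn n → ℝ) (u : Rn n → ℝ) (gu : Rn n → Rn n) : Prop :=
  MemX n s α β Ω u gu ∧
  ∀ v gv, MemX n s α β Ω v gv →
    IntegrableOn (fun x => ((m x - μ x * u x) * u x + τ * Jconv Ω J u x) * v x) Ω ∧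
    α * (∫ x in Ω, ∑ i, gu x i * gv x i) + β / 2 * gagForm n s Ω u v =
      ∫ x in Ω, ((m x - μ x * u x) * u x + τ * Jconv Ω J u x) * v x

/-- The energy functional `𝓔`. -/
def energy (n : ℕ) (s α β : ℝ) (Ω : Set (Rn n)) (m μ : Rn n → ℝ) (τ : ℝ)
    (J : Rn n → ℝ) (u : Rn n → ℝ) (g : Rn n → Rn n) : ℝ :=
  α / 2 * (∫ x in Ω, ‖g x‖ ^ 2) + β / 4 * (gagEnergy n s Ω u).toReal +
    ∫ x in Ω, (μ x * |u x| ^ 3 / 3 - m x * u x ^ 2 / 2 - τ * u x * Jconv Ω J u x / 2)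

/-- The first positive eigenvalue `λ₁(m)`, defined variationally. -/
def lambda1 (n : ℕ) (s α β : ℝ) (Ω : Set (Rn n)) (m : Rn n → ℝ) : ℝ :=
  sInf { t : ℝ | ∃ u g, MemX n s α β Ω u g ∧
    IntegrableOn (fun x => m x * u x ^ 2) Ω ∧
    (∫ x in Ω, m x * u x ^ 2) = 1 ∧ t = seminormSq n s α β Ω u g }

/-- The class of resources `𝓜(m̄, m̲, m₀)`. -/
def resClass {n : ℕ} (Ω : Set (Rn n)) (mbar mlow m0 : ℝ) : Set (Rn n → ℝ) :=
  { m | AEStronglyMeasurable m (volume.restrict Ω) ∧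
      (∀ᵐ x ∂volume.restrict Ω, -mlow ≤ m x ∧ m x ≤ mbar) ∧
      (∫ x in Ω, m x) = m0 * (volume Ω).toReal ∧
      0 < volume {x ∈ Ω | 0 < m x} }

/-- `λ̲(m̄, m̲, m₀) := inf { λ₁(m) : m ∈ 𝓜(m̄, m̲, m₀) }`. -/
def lamLow (n : ℕ) (s α β : ℝ) (Ω : Set (Rn n)) (mbar mlow m0 : ℝ) : ℝ :=
  sInf (lambda1 n s α β Ω '' resClass Ω mbar mlow m0)

set_option maxHeartbeats 1000000 in
/-- if `m ≤ -τ` a.e. in `Ω`, any nonnegative solution of the `(α,β)`-Neumann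
logistic problem vanishes identically. -/
theorem statement6 {n : ℕ} (hn : 1 ≤ n) {s α β : ℝ} (hs0 : 0 < s) (hs1 : s < 1)
    (hα : 0 ≤ α) (hβ : 0 ≤ β) (hαβ : 0 < α + β)
    {Ω : Set (Rn n)} (hΩ : GoodDomain n β Ω)
    {m μ : Rn n → ℝ} {τ : ℝ} {J : Rn n → ℝ} (hD : GoodData n Ω m μ τ J)
    (hm : ∀ᵐ x ∂volume.restrict Ω, m x ≤ -τ)
    {u : Rn n → ℝ} {gu : Rn n → Rn n}
    (hsol : IsSolution n s α β Ω m μ τ J u gu)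
    (hpos : ∀ᵐ x ∂volume.restrict Ω, 0 ≤ u x) :
    ∀ᵐ x ∂volume.restrict Ω, u x = 0 := by
  classical
  obtain ⟨hX, hweak⟩ := hsol
  have hΩm : MeasurableSet Ω := hΩ.isOpen.measurableSet
  have hu : Measurable u := hX.meas
  have hu2 : Integrable (fun x => u x ^ 2) (volume.restrict Ω) := hX.l2.integrable_sq
  obtain ⟨hint, heq⟩ := hweak u gu hX
  obtain ⟨μ0, hμ0, hμlb⟩ := hD.mu_lb
  set f : Rn n → ℝ := fun x => ((m x - μ x * u x) * u x + τ * Jconv Ω J u x) * u x with hfdef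
  -- LHS of the weak formulation is nonnegative
  have hLHS : 0 ≤ ∫ x in Ω, f x := by
    rw [← heq]
    have hA : 0 ≤ ∫ x in Ω, ∑ i, gu x i * gu x i :=
      integral_nonneg fun x => Finset.sum_nonneg fun i _ => mul_self_nonneg _
    have hB : 0 ≤ gagForm n s Ω u u :=
      integral_nonneg fun p =>
        div_nonneg (mul_self_nonneg _) (Real.rpow_nonneg (norm_nonneg _) _)
    have h2 : (0:ℝ) ≤ β / 2 := by positivity
    exact add_nonneg (mul_nonneg hα hA) (mul_nonneg h2 hB)
  -- a measurable representative of J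
  have hJsm := hD.J_int.aestronglyMeasurable
  set J' : Rn n → ℝ := hJsm.mk J with hJ'def
  have hJ'sm : StronglyMeasurable J' := hJsm.stronglyMeasurable_mk
  have hJae : J =ᵐ[volume] J' := hJsm.ae_eq_mk
  have hJ'm : Measurable J' := hJ'sm.measurable
  have hJ'int : Integrable J' (volume : Measure (Rn n)) := hD.J_int.congr hJae
  have hJ'nn : ∀ᵐ x ∂(volume : Measure (Rn n)), 0 ≤ J' x := by
    filter_upwards [hD.J_nonneg, hJae] with x h1 h2
    rw [← h2]; exact h1
  have hJ'mass : (∫ x, J' x) = 1 := by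
    rw [← integral_congr_ae hJae, hD.J_mass]
  have hmpL : ∀ x : Rn n, MeasurePreserving (fun y : Rn n => x - y) volume volume :=
    fun x => Measure.measurePreserving_sub_left volume x
  have hmpR : ∀ y : Rn n, MeasurePreserving (fun x : Rn n => x - y) volume volume :=
    fun y => measurePreserving_sub_right volume y
  -- Jconv with J equals Jconv with J'
  have hJc : Jconv Ω J u = Jconv Ω J' u := by
    funext x
    refine integral_congr_ae ?_
    have h1 : (fun y => J (x - y)) =ᵐ[volume] fun y => J' (x - y) :=
      (hmpL x).quasiMeasurePreserving.ae_eq hJae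
    filter_upwards [ae_restrict_of_ae h1] with y hy
    exact congrArg (fun t => t * u y) hy
  -- Jconv is measurable
  have hJconv_m : Measurable (Jconv Ω J' u) := by
    have h1 : Measurable (fun p : Rn n × Rn n => J' (p.1 - p.2) * u p.2) :=
      (hJ'm.comp (measurable_fst.sub measurable_snd)).mul (hu.comp measurable_snd)
    have hF : StronglyMeasurable
        (Function.uncurry fun x y => (Ω.indicator (fun z => J' (x - z) * u z)) y) := by
      have heq2 : (Function.uncurry fun x y => (Ω.indicator (fun z => J' (x - z) * u z)) y)
          = (Set.univ ×ˢ Ω).indicator (fun p : Rn n × Rn n => J' (p.1 - p.2) * u p.2) := by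
        funext p
        by_cases hp : p.2 ∈ Ω <;>
          simp [Function.uncurry, Set.indicator, hp]
      rw [heq2]
      exact (h1.indicator (MeasurableSet.univ.prod hΩm)).stronglyMeasurable
    have h2 := hF.integral_prod_right (ν := (volume : Measure (Rn n)))
    have heq3 : Jconv Ω J' u = fun x => ∫ y, (Ω.indicator (fun z => J' (x - z) * u z)) y := by
      funext x
      rw [Jconv, ← integral_indicator hΩm]
    rw [heq3]
    exact h2.measurable
  -- Jconv is pointwise nonnegative
  have hJcnn : ∀ x, 0 ≤ Jconv Ω J u x := by
    intro x
    apply integral_nonneg_of_ae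
    have h1 : ∀ᵐ y ∂(volume : Measure (Rn n)), 0 ≤ J (x - y) :=
      (hmpL x).quasiMeasurePreserving.ae hD.J_nonneg
    filter_upwards [ae_restrict_of_ae h1, hpos] with y h1 h2
    exact mul_nonneg h1 h2
  -- the ENNReal quantities
  set U : Rn n → ℝ≥0∞ := fun x => ENNReal.ofReal (u x) with hUdef
  have hUm : Measurable U := hu.ennreal_ofReal
  set M : ℝ≥0∞ := ∫⁻ x in Ω, ENNReal.ofReal (u x ^ 2) with hMdef
  have hMne : M ≠ ∞ := by
    have := (hasFiniteIntegral_iff_ofReal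
      (Eventually.of_forall fun x => sq_nonneg (u x))).1 hu2.hasFiniteIntegral
    exact this.ne
  -- translation bounds on J'
  have hb1 : ∀ x : Rn n, (∫⁻ y in Ω, ENNReal.ofReal (J' (x - y))) ≤ 1 := by
    intro x
    calc (∫⁻ y in Ω, ENNReal.ofReal (J' (x - y)))
        ≤ ∫⁻ y, ENNReal.ofReal (J' (x - y)) := setLIntegral_le_lintegral _ _
      _ = ∫⁻ z, ENNReal.ofReal (J' z) := (hmpL x).lintegral_comp hJ'm.ennreal_ofReal
      _ = ENNReal.ofReal (∫ z, J' z) := (ofReal_integral_eq_lintegral_ofReal hJ'int hJ'nn).symm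
      _ = 1 := by rw [hJ'mass, ENNReal.ofReal_one]
  have hb2 : ∀ y : Rn n, (∫⁻ x in Ω, ENNReal.ofReal (J' (x - y))) ≤ 1 := by
    intro y
    calc (∫⁻ x in Ω, ENNReal.ofReal (J' (x - y)))
        ≤ ∫⁻ x, ENNReal.ofReal (J' (x - y)) := setLIntegral_le_lintegral _ _
      _ = ∫⁻ z, ENNReal.ofReal (J' z) := (hmpR y).lintegral_comp hJ'm.ennreal_ofReal
      _ = ENNReal.ofReal (∫ z, J' z) := (ofReal_integral_eq_lintegral_ofReal hJ'int hJ'nn).symm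
      _ = 1 := by rw [hJ'mass, ENNReal.ofReal_one]
  -- elementary AM-GM in ℝ≥0∞
  have key : ∀ a b : ℝ, 2 * (ENNReal.ofReal a * ENNReal.ofReal b)
      ≤ ENNReal.ofReal (a ^ 2) + ENNReal.ofReal (b ^ 2) := by
    intro a b
    rcases le_or_gt a 0 with ha | ha
    · rw [ENNReal.ofReal_eq_zero.2 ha]
      simp
    rcases le_or_gt b 0 with hb | hb
    · rw [ENNReal.ofReal_eq_zero.2 hb]
      simp
    · have h2 : (2 : ℝ≥0∞) = ENNReal.ofReal 2 := by
        rw [ENNReal.ofReal_ofNat]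
      rw [← ENNReal.ofReal_mul ha.le, h2, ← ENNReal.ofReal_mul (by norm_num),
        ← ENNReal.ofReal_add (sq_nonneg a) (sq_nonneg b)]
      exact ENNReal.ofReal_le_ofReal (by nlinarith [sq_nonneg (a - b)])
  -- Young-type estimate
  have hYoung : (∫⁻ x in Ω, ∫⁻ y in Ω, ENNReal.ofReal (J' (x - y)) * (U x * U y)) ≤ M := by
    have hWy : ∀ x : Rn n, Measurable fun y : Rn n => ENNReal.ofReal (J' (x - y)) :=
      fun x => (hJ'm.comp (measurable_const.sub measurable_id)).ennreal_ofReal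
    have hterm1 : (∫⁻ x in Ω, ∫⁻ y in Ω,
        ENNReal.ofReal (J' (x - y)) * ENNReal.ofReal (u x ^ 2)) ≤ M := by
      calc (∫⁻ x in Ω, ∫⁻ y in Ω, ENNReal.ofReal (J' (x - y)) * ENNReal.ofReal (u x ^ 2))
          = ∫⁻ x in Ω, (∫⁻ y in Ω, ENNReal.ofReal (J' (x - y))) * ENNReal.ofReal (u x ^ 2) := by
            refine lintegral_congr fun x => ?_
            exact lintegral_mul_const' _ _ ENNReal.ofReal_ne_top
        _ ≤ ∫⁻ x in Ω, 1 * ENNReal.ofReal (u x ^ 2) :=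
            lintegral_mono fun x => mul_le_mul_left (hb1 x) _
        _ = M := by simp [hMdef]
    have hterm2 : (∫⁻ x in Ω, ∫⁻ y in Ω,
        ENNReal.ofReal (J' (x - y)) * ENNReal.ofReal (u y ^ 2)) ≤ M := by
      have hswap : (∫⁻ x in Ω, ∫⁻ y in Ω,
          ENNReal.ofReal (J' (x - y)) * ENNReal.ofReal (u y ^ 2))
          = ∫⁻ y in Ω, ∫⁻ x in Ω,
            ENNReal.ofReal (J' (x - y)) * ENNReal.ofReal (u y ^ 2) := by
        refine lintegral_lintegral_swap ?_
        exact ((hJ'm.comp (measurable_fst.sub measurable_snd)).ennreal_ofReal.mul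
          ((hu.comp measurable_snd).pow_const 2).ennreal_ofReal).aemeasurable
      rw [hswap]
      calc (∫⁻ y in Ω, ∫⁻ x in Ω, ENNReal.ofReal (J' (x - y)) * ENNReal.ofReal (u y ^ 2))
          = ∫⁻ y in Ω, (∫⁻ x in Ω, ENNReal.ofReal (J' (x - y))) * ENNReal.ofReal (u y ^ 2) := by
            refine lintegral_congr fun y => ?_
            exact lintegral_mul_const' _ _ ENNReal.ofReal_ne_top
        _ ≤ ∫⁻ y in Ω, 1 * ENNReal.ofReal (u y ^ 2) :=
            lintegral_mono fun y => mul_le_mul_left (hb2 y) _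
        _ = M := by simp [hMdef]
    have h2M : (2 : ℝ≥0∞) * (∫⁻ x in Ω, ∫⁻ y in Ω,
        ENNReal.ofReal (J' (x - y)) * (U x * U y)) ≤ 2 * M := by
      rw [← lintegral_const_mul' (2 : ℝ≥0∞) _ (by norm_num)]
      calc (∫⁻ x in Ω, 2 * ∫⁻ y in Ω, ENNReal.ofReal (J' (x - y)) * (U x * U y))
          = ∫⁻ x in Ω, ∫⁻ y in Ω, 2 * (ENNReal.ofReal (J' (x - y)) * (U x * U y)) := by
            refine lintegral_congr fun x => ?_
            exact (lintegral_const_mul' (2 : ℝ≥0∞) _ (by norm_num)).symm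
        _ ≤ ∫⁻ x in Ω, ∫⁻ y in Ω, (ENNReal.ofReal (J' (x - y)) * ENNReal.ofReal (u x ^ 2)
              + ENNReal.ofReal (J' (x - y)) * ENNReal.ofReal (u y ^ 2)) := by
            refine lintegral_mono fun x => lintegral_mono fun y => ?_
            have h3 : 2 * (ENNReal.ofReal (J' (x - y)) * (U x * U y))
                = ENNReal.ofReal (J' (x - y)) * (2 * (U x * U y)) := by ring
            rw [h3, ← mul_add]
            exact mul_le_mul_right (key (u x) (u y)) _
        _ = (∫⁻ x in Ω, ∫⁻ y in Ω, ENNReal.ofReal (J' (x - y)) * ENNReal.ofReal (u x ^ 2))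
              + ∫⁻ x in Ω, ∫⁻ y in Ω, ENNReal.ofReal (J' (x - y)) * ENNReal.ofReal (u y ^ 2) := by
            rw [← lintegral_add_left]
            · refine lintegral_congr fun x => ?_
              exact lintegral_add_left ((hWy x).mul_const _) _
            · have : Measurable fun p : Rn n × Rn n =>
                  ENNReal.ofReal (J' (p.1 - p.2)) * ENNReal.ofReal (u p.1 ^ 2) :=
                (hJ'm.comp (measurable_fst.sub measurable_snd)).ennreal_ofReal.mul
                  ((hu.comp measurable_fst).pow_const 2).ennreal_ofReal
              exact this.lintegral_prod_right'
        _ ≤ M + M := add_le_add hterm1 hterm2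
        _ = 2 * M := (two_mul M).symm
    exact (ENNReal.mul_le_mul_iff_right (by norm_num) (by norm_num)).1 h2M
  -- pointwise bound on ofReal (Jconv)
  have hJcle : ∀ x, ENNReal.ofReal (Jconv Ω J u x)
      ≤ ∫⁻ y in Ω, ENNReal.ofReal (J' (x - y)) * U y := by
    intro x
    have hnn : ∀ᵐ y ∂volume.restrict Ω, 0 ≤ J' (x - y) * u y := by
      have h1 : ∀ᵐ y ∂(volume : Measure (Rn n)), 0 ≤ J' (x - y) :=
        (hmpL x).quasiMeasurePreserving.ae hJ'nn
      filter_upwards [ae_restrict_of_ae h1, hpos] with y h1 h2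
      exact mul_nonneg h1 h2
    have hEq : (∫⁻ y in Ω, ENNReal.ofReal (J' (x - y) * u y))
        = ∫⁻ y in Ω, ENNReal.ofReal (J' (x - y)) * U y := by
      refine lintegral_congr_ae ?_
      filter_upwards [hpos] with y hy
      exact ENNReal.ofReal_mul' hy
    rw [hJc]
    rcases em (Integrable (fun y => J' (x - y) * u y) (volume.restrict Ω)) with hI | hI
    · rw [Jconv, ofReal_integral_eq_lintegral_ofReal hI hnn, hEq]
    · rw [Jconv, integral_undef hI]
      simp
  -- the product term is controlled
  set K : Rn n → ℝ := fun x => Jconv Ω J u x * u x with hKdef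
  have hK1 : (∫⁻ x in Ω, ENNReal.ofReal (K x)) ≤ M := by
    calc (∫⁻ x in Ω, ENNReal.ofReal (K x))
        ≤ ∫⁻ x in Ω, (∫⁻ y in Ω, ENNReal.ofReal (J' (x - y)) * U y) * U x := by
          refine lintegral_mono_ae ?_
          filter_upwards [hpos] with x hx
          rw [hKdef]
          simp only
          rw [ENNReal.ofReal_mul' hx]
          exact mul_le_mul_left (hJcle x) _
      _ = ∫⁻ x in Ω, ∫⁻ y in Ω, ENNReal.ofReal (J' (x - y)) * (U x * U y) := by
          refine lintegral_congr fun x => ?_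
          rw [← lintegral_mul_const' (U x) _ ENNReal.ofReal_ne_top]
          refine lintegral_congr fun y => ?_
          ring
      _ ≤ M := hYoung
  have hKm : AEStronglyMeasurable K (volume.restrict Ω) := by
    have : Measurable K := by
      rw [hKdef, hJc]
      exact hJconv_m.mul hu
    exact this.aestronglyMeasurable
  have hKnn : ∀ᵐ x ∂volume.restrict Ω, 0 ≤ K x := by
    filter_upwards [hpos] with x hx
    exact mul_nonneg (hJcnn x) hx
  have hKint : IntegrableOn K Ω := by
    refine ⟨hKm, ?_⟩
    rw [hasFiniteIntegral_iff_ofReal hKnn]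
    exact lt_of_le_of_lt hK1 (lt_of_le_of_ne le_top hMne)
  have hKle : (∫ x in Ω, K x) ≤ ∫ x in Ω, u x ^ 2 := by
    rw [integral_eq_lintegral_of_nonneg_ae hKnn hKm,
      integral_eq_lintegral_of_nonneg_ae (Eventually.of_forall fun x => sq_nonneg (u x))
        ((hu.pow_const 2).aestronglyMeasurable)]
    exact ENNReal.toReal_mono hMne hK1
  -- split the integral of f
  have hfdecomp : ∀ x, f x = (m x - μ x * u x) * u x * u x + τ * K x := by
    intro x
    simp only [hfdef, hKdef]
    ring
  have hGint : IntegrableOn (fun x => (m x - μ x * u x) * u x * u x) Ω := by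
    have h1 : (fun x => (m x - μ x * u x) * u x * u x) = fun x => f x - τ * K x := by
      funext x
      rw [hfdecomp x]
      ring
    rw [h1]
    exact hint.sub (hKint.const_mul τ)
  have hsplit : (∫ x in Ω, f x)
      = (∫ x in Ω, (m x - μ x * u x) * u x * u x) + τ * ∫ x in Ω, K x := by
    calc (∫ x in Ω, f x) = ∫ x in Ω, ((m x - μ x * u x) * u x * u x + τ * K x) :=
          integral_congr_ae (Eventually.of_forall hfdecomp)
      _ = (∫ x in Ω, (m x - μ x * u x) * u x * u x) + ∫ x in Ω, τ * K x :=
          integral_add hGint (hKint.const_mul τ)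
      _ = _ := by rw [integral_const_mul]
  -- the comparison function G
  set G : Rn n → ℝ := fun x => (m x - μ x * u x) * u x * u x + τ * u x ^ 2 with hGdef
  have hGint2 : IntegrableOn G Ω := hGint.add (hu2.const_mul τ)
  have hfG : (∫ x in Ω, f x) ≤ ∫ x in Ω, G x := by
    have hGsplit : (∫ x in Ω, G x)
        = (∫ x in Ω, (m x - μ x * u x) * u x * u x) + τ * ∫ x in Ω, u x ^ 2 := by
      rw [hGdef]
      rw [integral_add hGint (hu2.const_mul τ), integral_const_mul]
    rw [hsplit, hGsplit]
    have := mul_le_mul_of_nonneg_left hKle hD.tau_nonneg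
    linarith
  have hGle : ∀ᵐ x ∂volume.restrict Ω, G x ≤ -(μ0 * u x ^ 3) := by
    filter_upwards [hm, hμlb, hpos] with x h1 h2 h3
    have h4 : m x + τ - μ x * u x ≤ -(μ0 * u x) := by nlinarith
    have h5 := mul_le_mul_of_nonneg_right h4 (sq_nonneg (u x))
    simp only [hGdef]
    nlinarith
  have h3int : Integrable (fun x => u x ^ 3) (volume.restrict Ω) := by
    refine Integrable.mono' (hGint2.neg.const_mul μ0⁻¹)
      ((hu.pow_const 3).aestronglyMeasurable) ?_
    filter_upwards [hGle, hpos] with x h1 h2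
    rw [Real.norm_eq_abs, abs_of_nonneg (pow_nonneg h2 3)]
    have h6 : μ0 * u x ^ 3 ≤ -G x := by linarith
    have h7 := mul_le_mul_of_nonneg_left h6 (inv_nonneg.2 hμ0.le)
    rwa [inv_mul_cancel_left₀ (ne_of_gt hμ0)] at h7
  have h3nn : ∀ᵐ x ∂volume.restrict Ω, 0 ≤ u x ^ 3 := by
    filter_upwards [hpos] with x hx
    exact pow_nonneg hx 3
  have hμint : (∫ x in Ω, μ0 * u x ^ 3) ≤ ∫ x in Ω, -G x := by
    refine integral_mono_ae (h3int.const_mul μ0) hGint2.neg ?_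
    filter_upwards [hGle] with x hx
    linarith
  have hG0 : 0 ≤ ∫ x in Ω, G x := le_trans hLHS hfG
  have h3le : (∫ x in Ω, u x ^ 3) ≤ 0 := by
    rw [integral_const_mul, integral_neg] at hμint
    nlinarith
  have h3ge : 0 ≤ ∫ x in Ω, u x ^ 3 := integral_nonneg_of_ae h3nn
  have h3eq : (∫ x in Ω, u x ^ 3) = 0 := le_antisymm h3le h3ge
  have h5 := (integral_eq_zero_iff_of_nonneg_ae h3nn h3int).1 h3eq
  filter_upwards [h5] with x hx
  have hx' : u x ^ 3 = 0 := hx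
  exact pow_eq_zero_iff (by norm_num) |>.1 hx'
end
end

section
/- Let n ≥ 3 be an integer, s ∈ (0,1), γ > 0, c ∈ ℝ, and let Ω ⊂ ℝⁿ be a bounded open set with B₂ ⊆ Ω, where B_r denotes the open Euclidean ball of radius r centered at the origin. For ρ ∈ (0,1) define φ_ρ : ℝⁿ → ℝ by φ_ρ(x) := c + 1 if |x| < ρ; φ_ρ(x) := c + (ρ^γ/(1 − ρ^γ))·(|x|^{−γ} − 1) if ρ ≤ |x| < 1; and φ_ρ(x) := c if |x| ≥ 1. Then, with Q := ℝ²ⁿ \ ((ℝⁿ\Ω)×(ℝⁿ\Ω)), one has lim_{ρ→0⁺} ∬_Q |φ_ρ(x) − φ_ρ(y)|²/|x−y|^{n+2s} dx dy = 0. -/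
open MeasureTheory Set
open scoped ENNReal Topology

noncomputable section

/-- The radial auxiliary function `φ_ρ` of power type. -/
def phiRho (n : ℕ) (γ c ρ : ℝ) (x : Rn n) : ℝ :=
  if ‖x‖ < ρ then c + 1
  else if ‖x‖ < 1 then c + ρ ^ γ / (1 - ρ ^ γ) * (‖x‖ ^ (-γ) - 1)
  else c

/-!
The function `φ_ρ` takes values in `[c, c + 1]` and is constant outside the unit ball, and the
mean value theorem for `t ↦ t ^ (-γ)` gives, for `‖x‖ ≤ ‖y‖`,
`|φ_ρ x - φ_ρ y| ≤ min 1 (K_ρ x * ‖x - y‖)` with `K_ρ x = γ ρ^γ / (1 - ρ^γ) * max ρ ‖x‖ ^ (-γ-1)`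
on the unit ball and `K_ρ x = 0` outside (`phiRhoSlope`). Integrating in `y` first, the
substitution `w = K_ρ x • (x - y)` turns the inner integral into `K_ρ(x)^(2s)` times
`∫ min(1, ‖w‖)² / ‖w‖^(n+2s) dw`, which is finite because `0 < s < 1`. For `0 < β ≤ 2sγ` and
small `ρ` we have `K_ρ(x)^(2s) ≤ (2γ)^(2s) ρ^β ‖x‖^(-(β+2s))`, which is integrable on the unit
ball once `β + 2s < n`. So the energy over all of `ℝⁿ × ℝⁿ`, and a fortiori over `Q`, is
`O(ρ^β)`.
-/

open Filter Metric

lemma rpow_neg_sub_rpow_neg_le {γ u v : ℝ} (hγ : 0 ≤ γ) (hu : 0 < u) (huv : u ≤ v) :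
    u ^ (-γ) - v ^ (-γ) ≤ γ * u ^ (-γ - 1) * (v - u) := by
  have hmvt := Convex.norm_image_sub_le_of_norm_hasDerivWithin_le
    (f := fun t : ℝ ↦ t ^ (-γ)) (f' := fun t ↦ -γ * t ^ (-γ - 1)) (C := γ * u ^ (-γ - 1))
    (fun t ht ↦ (Real.hasDerivAt_rpow_const (.inl (hu.trans_le ht.1).ne')).hasDerivWithinAt)
    (fun t ht ↦ by
      rw [norm_mul, norm_neg, Real.norm_of_nonneg hγ,
        Real.norm_of_nonneg (Real.rpow_nonneg (hu.le.trans ht.1) _)]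
      exact mul_le_mul_of_nonneg_left (Real.rpow_le_rpow_of_nonpos hu ht.1 (by linarith)) hγ)
    (convex_Icc u v) (left_mem_Icc.2 huv) (right_mem_Icc.2 huv)
  rw [Real.norm_eq_abs, Real.norm_of_nonneg (sub_nonneg.2 huv), abs_sub_comm] at hmvt
  exact (le_abs_self _).trans hmvt

lemma abs_max_min_sub_max_min_le {α : Type*} [AddCommGroup α] [LinearOrder α]
    [IsOrderedAddMonoid α] (a b c d : α) :
    |max a (min b c) - max a (min d c)| ≤ |b - d| := by
  rw [max_comm a, max_comm a]
  refine (abs_max_sub_max_le_abs _ _ _).trans ?_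
  simpa using abs_min_sub_min_le_max b c d c

lemma rpow_mul_max_rpow_neg_le {ρ r a b β : ℝ} (hρ : 0 < ρ) (hr : 0 < r) (hβa : β ≤ a)
    (hβb : 0 ≤ β + b) :
    ρ ^ a * max ρ r ^ (-(a + b)) ≤ ρ ^ β * r ^ (-(β + b)) := by
  set m := max ρ r
  have hm : 0 < m := hρ.trans_le (le_max_left _ _)
  have hratio : ρ ^ (a - β) * m ^ (-(a - β)) ≤ 1 := by
    rw [Real.rpow_neg hm.le, ← div_eq_mul_inv, div_le_one (Real.rpow_pos_of_pos hm _)]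
    exact Real.rpow_le_rpow hρ.le (le_max_left _ _) (sub_nonneg.2 hβa)
  calc ρ ^ a * m ^ (-(a + b))
      = ρ ^ β * m ^ (-(β + b)) * (ρ ^ (a - β) * m ^ (-(a - β))) := by
        rw [show ρ ^ a = ρ ^ β * ρ ^ (a - β) by rw [← Real.rpow_add hρ]; ring_nf,
          show m ^ (-(a + b)) = m ^ (-(β + b)) * m ^ (-(a - β)) by rw [← Real.rpow_add hm]; ring_nf]
        ring
    _ ≤ ρ ^ β * m ^ (-(β + b)) := mul_le_of_le_one_right (by positivity) hratio
    _ ≤ ρ ^ β * r ^ (-(β + b)) := mul_le_mul_of_nonneg_left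
        (Real.rpow_le_rpow_of_nonpos hr (le_max_right _ _) (neg_nonpos.2 hβb)) (by positivity)

section PhiRho

variable {n : ℕ} {γ c ρ : ℝ}

lemma phiRho_coeff_pos (hγ : 0 < γ) (hρ0 : 0 < ρ) (hρ1 : ρ < 1) : 0 < ρ ^ γ / (1 - ρ ^ γ) :=
  div_pos (Real.rpow_pos_of_pos hρ0 γ) (sub_pos.2 (Real.rpow_lt_one hρ0.le hρ1 hγ))

lemma phiRho_coeff_mul (hγ : 0 < γ) (hρ0 : 0 < ρ) (hρ1 : ρ < 1) :
    ρ ^ γ / (1 - ρ ^ γ) * (ρ ^ (-γ) - 1) = 1 := by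
  have hργ : ρ ^ γ ≠ 0 := (Real.rpow_pos_of_pos hρ0 γ).ne'
  have hden : 1 - ρ ^ γ ≠ 0 := (sub_pos.2 (Real.rpow_lt_one hρ0.le hρ1 hγ)).ne'
  rw [Real.rpow_neg hρ0.le]
  field_simp

lemma phiRho_eq_clamp (hγ : 0 < γ) (hρ0 : 0 < ρ) (hρ1 : ρ < 1) (x : Rn n) :
    phiRho n γ c ρ x = c + ρ ^ γ / (1 - ρ ^ γ) * (max ρ (min ‖x‖ 1) ^ (-γ) - 1) := by
  unfold phiRho
  split_ifs with hρx hx1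
  · rw [min_eq_left (hρx.trans hρ1).le, max_eq_left hρx.le, phiRho_coeff_mul hγ hρ0 hρ1]
  · rw [min_eq_left hx1.le, max_eq_right (not_lt.1 hρx)]
  · rw [min_eq_right (not_lt.1 hx1), max_eq_right hρ1.le, Real.one_rpow, sub_self, mul_zero,
      add_zero]

lemma phiRho_of_one_le_norm (hρ1 : ρ < 1) {x : Rn n} (hx : 1 ≤ ‖x‖) : phiRho n γ c ρ x = c := by
  rw [phiRho, if_neg (by linarith), if_neg hx.not_gt]

lemma phiRho_mem_Icc (hγ : 0 < γ) (hρ0 : 0 < ρ) (hρ1 : ρ < 1) (x : Rn n) :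
    phiRho n γ c ρ x ∈ Icc c (c + 1) := by
  set u := max ρ (min ‖x‖ 1)
  have hρu : ρ ≤ u := le_max_left _ _
  have hu1 : u ≤ 1 := max_le hρ1.le (min_le_right _ _)
  have hlower : 1 ≤ u ^ (-γ) := by
    simpa using Real.rpow_le_rpow_of_nonpos (hρ0.trans_le hρu) hu1 (neg_nonpos.2 hγ.le)
  have hupper : u ^ (-γ) ≤ ρ ^ (-γ) := Real.rpow_le_rpow_of_nonpos hρ0 hρu (neg_nonpos.2 hγ.le)
  have hA := phiRho_coeff_pos hγ hρ0 hρ1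
  rw [phiRho_eq_clamp hγ hρ0 hρ1]
  constructor
  · nlinarith
  · nlinarith [phiRho_coeff_mul hγ hρ0 hρ1]

def phiRhoSlope (n : ℕ) (γ ρ : ℝ) : Rn n → ℝ :=
  (ball 0 1).indicator fun x ↦ ρ ^ γ / (1 - ρ ^ γ) * γ * max ρ ‖x‖ ^ (-γ - 1)

lemma phiRhoSlope_nonneg (hγ : 0 < γ) (hρ0 : 0 < ρ) (hρ1 : ρ < 1) (x : Rn n) :
    0 ≤ phiRhoSlope n γ ρ x := by
  have hA := phiRho_coeff_pos hγ hρ0 hρ1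
  have hm : 0 < max ρ ‖x‖ := hρ0.trans_le (le_max_left _ _)
  unfold phiRhoSlope
  exact indicator_nonneg (fun _ _ ↦ by positivity) x

lemma abs_phiRho_sub_le_slope_mul (hγ : 0 < γ) (hρ0 : 0 < ρ) (hρ1 : ρ < 1) {x y : Rn n}
    (hxy : ‖x‖ ≤ ‖y‖) :
    |phiRho n γ c ρ x - phiRho n γ c ρ y| ≤ phiRhoSlope n γ ρ x * ‖x - y‖ := by
  by_cases hx1 : ‖x‖ < 1
  swap
  · rw [phiRho_of_one_le_norm hρ1 (not_lt.1 hx1),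
      phiRho_of_one_le_norm hρ1 ((not_lt.1 hx1).trans hxy), sub_self, abs_zero]
    exact mul_nonneg (phiRhoSlope_nonneg hγ hρ0 hρ1 x) (norm_nonneg _)
  set u := max ρ (min ‖x‖ 1)
  set v := max ρ (min ‖y‖ 1)
  have hu : 0 < u := hρ0.trans_le (le_max_left _ _)
  have huv : u ≤ v := max_le_max le_rfl (min_le_min_right 1 hxy)
  have hvu : v - u ≤ ‖x - y‖ := calc
    v - u ≤ |v - u| := le_abs_self _
    _ ≤ |‖y‖ - ‖x‖| := abs_max_min_sub_max_min_le ρ ‖y‖ 1 ‖x‖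
    _ ≤ ‖x - y‖ := by rw [norm_sub_rev]; exact abs_norm_sub_norm_le y x
  have hA := phiRho_coeff_pos hγ hρ0 hρ1
  have hslope : phiRhoSlope n γ ρ x = ρ ^ γ / (1 - ρ ^ γ) * γ * u ^ (-γ - 1) := by
    simp only [phiRhoSlope, indicator_of_mem (mem_ball_zero_iff.2 hx1), u, min_eq_left hx1.le]
  have hdiff : phiRho n γ c ρ x - phiRho n γ c ρ y
      = ρ ^ γ / (1 - ρ ^ γ) * (u ^ (-γ) - v ^ (-γ)) := by
    rw [phiRho_eq_clamp hγ hρ0 hρ1, phiRho_eq_clamp hγ hρ0 hρ1]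
    ring
  rw [hdiff, hslope, abs_of_nonneg (mul_nonneg hA.le (sub_nonneg.2
    (Real.rpow_le_rpow_of_nonpos hu huv (neg_nonpos.2 hγ.le))))]
  calc ρ ^ γ / (1 - ρ ^ γ) * (u ^ (-γ) - v ^ (-γ))
      ≤ ρ ^ γ / (1 - ρ ^ γ) * (γ * u ^ (-γ - 1) * (v - u)) :=
        mul_le_mul_of_nonneg_left (rpow_neg_sub_rpow_neg_le hγ.le hu huv) hA.le
    _ ≤ ρ ^ γ / (1 - ρ ^ γ) * (γ * u ^ (-γ - 1) * ‖x - y‖) := by gcongr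
    _ = ρ ^ γ / (1 - ρ ^ γ) * γ * u ^ (-γ - 1) * ‖x - y‖ := by ring

lemma abs_phiRho_sub_le (hγ : 0 < γ) (hρ0 : 0 < ρ) (hρ1 : ρ < 1) {x y : Rn n}
    (hxy : ‖x‖ ≤ ‖y‖) :
    |phiRho n γ c ρ x - phiRho n γ c ρ y| ≤ min 1 (phiRhoSlope n γ ρ x * ‖x - y‖) := by
  have hx := phiRho_mem_Icc (c := c) hγ hρ0 hρ1 x
  have hy := phiRho_mem_Icc (c := c) hγ hρ0 hρ1 y
  refine le_min (abs_sub_le_iff.2 ⟨?_, ?_⟩) (abs_phiRho_sub_le_slope_mul hγ hρ0 hρ1 hxy)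
  · linarith [hx.2, hy.1]
  · linarith [hx.1, hy.2]

end PhiRho

section Energy

open Module

variable {E : Type*} [NormedAddCommGroup E] [NormedSpace ℝ E] [FiniteDimensional ℝ E]
  [MeasurableSpace E] [BorelSpace E] (μ : Measure E) [μ.IsAddHaarMeasure]

lemma lintegral_min_one_mul_norm_sq_div_rpow {q K : ℝ} (hq : (finrank ℝ E : ℝ) < q)
    (hK : 0 ≤ K) :
    ∫⁻ z, ENNReal.ofReal (min 1 (K * ‖z‖) ^ 2 / ‖z‖ ^ q) ∂μ
      = ENNReal.ofReal (K ^ (q - finrank ℝ E))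
        * ∫⁻ w, ENNReal.ofReal (min 1 ‖w‖ ^ 2 / ‖w‖ ^ q) ∂μ := by
  rcases hK.eq_or_lt with rfl | hK
  · simp [Real.zero_rpow (sub_pos.2 hq).ne']
  have hsmul : ∀ z : E, ENNReal.ofReal (min 1 (K * ‖z‖) ^ 2 / ‖z‖ ^ q)
      = ENNReal.ofReal (K ^ q) * ENNReal.ofReal (min 1 ‖K • z‖ ^ 2 / ‖K • z‖ ^ q) := by
    intro z
    rw [← ENNReal.ofReal_mul (Real.rpow_nonneg hK.le q), norm_smul, Real.norm_of_nonneg hK.le,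
      Real.mul_rpow hK.le (norm_nonneg z)]
    rcases (norm_nonneg z).eq_or_lt with hz | hz
    · simp [← hz]
    · have := Real.rpow_pos_of_pos hK q
      have := Real.rpow_pos_of_pos hz q
      field_simp
  have hK_pow : K ^ q * |(K ^ finrank ℝ E)⁻¹| = K ^ (q - finrank ℝ E) := by
    rw [abs_of_pos (by positivity), Real.rpow_sub hK, Real.rpow_natCast, div_eq_mul_inv]
  rw [lintegral_congr hsmul, lintegral_const_mul' _ _ ENNReal.ofReal_ne_top,
    ← lintegral_map (f := fun w ↦ ENNReal.ofReal (min 1 ‖w‖ ^ 2 / ‖w‖ ^ q)) (by fun_prop)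
      (measurable_const_smul K), Measure.map_addHaar_smul μ hK.ne',
    lintegral_smul_measure, smul_eq_mul, ← mul_assoc, ← ENNReal.ofReal_mul (by positivity),
    hK_pow]

lemma lintegral_sq_div_rpow_le_of_abs_sub_le {q : ℝ} (hq : (finrank ℝ E : ℝ) < q) {u K : E → ℝ}
    (hK0 : ∀ x, 0 ≤ K x) (hKm : Measurable K)
    (hu : ∀ x y, ‖x‖ ≤ ‖y‖ → |u x - u y| ≤ min 1 (K x * ‖x - y‖)) :
    ∫⁻ p, ENNReal.ofReal (|u p.1 - u p.2| ^ 2 / ‖p.1 - p.2‖ ^ q) ∂(μ.prod μ)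
      ≤ 2 * (∫⁻ x, ENNReal.ofReal (K x ^ (q - finrank ℝ E)) ∂μ)
        * ∫⁻ w, ENNReal.ofReal (min 1 ‖w‖ ^ 2 / ‖w‖ ^ q) ∂μ := by
  set H : E × E → ℝ≥0∞ := fun p ↦ ENNReal.ofReal (min 1 (K p.1 * ‖p.1 - p.2‖) ^ 2 / ‖p.1 - p.2‖ ^ q)
  have hHm : Measurable H := by fun_prop
  have hle_H : ∀ x y, ‖x‖ ≤ ‖y‖ →
      ENNReal.ofReal (|u x - u y| ^ 2 / ‖x - y‖ ^ q) ≤ H (x, y) := fun x y hxy ↦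
    ENNReal.ofReal_le_ofReal <| div_le_div_of_nonneg_right
      (pow_le_pow_left₀ (abs_nonneg _) (hu x y hxy) 2) (Real.rpow_nonneg (norm_nonneg _) _)
  have hle : ∀ p : E × E,
      ENNReal.ofReal (|u p.1 - u p.2| ^ 2 / ‖p.1 - p.2‖ ^ q) ≤ H p + H p.swap := by
    rintro ⟨x, y⟩
    rcases le_total ‖x‖ ‖y‖ with hxy | hyx
    · exact (hle_H x y hxy).trans le_self_add
    · rw [abs_sub_comm, norm_sub_rev]
      exact (hle_H y x hyx).trans le_add_self
  have hH : ∫⁻ p, H p ∂(μ.prod μ) = (∫⁻ x, ENNReal.ofReal (K x ^ (q - finrank ℝ E)) ∂μ)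
      * ∫⁻ w, ENNReal.ofReal (min 1 ‖w‖ ^ 2 / ‖w‖ ^ q) ∂μ := by
    rw [lintegral_prod _ hHm.aemeasurable, ← lintegral_mul_const _ (by fun_prop)]
    refine lintegral_congr fun x ↦ ?_
    rw [← lintegral_min_one_mul_norm_sq_div_rpow μ hq (hK0 x),
      ← lintegral_sub_left_eq_self _ x]
    simp [H]
  calc ∫⁻ p, ENNReal.ofReal (|u p.1 - u p.2| ^ 2 / ‖p.1 - p.2‖ ^ q) ∂(μ.prod μ)
      ≤ ∫⁻ p, H p + H p.swap ∂(μ.prod μ) := lintegral_mono hle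
    _ = 2 * ∫⁻ p, H p ∂(μ.prod μ) := by
        rw [lintegral_add_left hHm, lintegral_prod_swap, two_mul]
    _ = _ := by rw [hH, mul_assoc]

end Energy

section Finiteness

open Module

variable {E : Type*} [NormedAddCommGroup E] [NormedSpace ℝ E] [FiniteDimensional ℝ E]
  [MeasurableSpace E] [BorelSpace E] [Nontrivial E] (μ : Measure E) [μ.IsAddHaarMeasure]

lemma lintegral_min_one_norm_sq_div_rpow_lt_top {q : ℝ} (hq0 : (finrank ℝ E : ℝ) < q)
    (hq2 : q < finrank ℝ E + 2) :
    ∫⁻ w, ENNReal.ofReal (min 1 ‖w‖ ^ 2 / ‖w‖ ^ q) ∂μ < ∞ := by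
  refine Integrable.lintegral_lt_top ?_
  rw [integrable_fun_norm_addHaar μ (f := fun r ↦ min 1 r ^ 2 / r ^ q),
    ← Ioc_union_Ioi_eq_Ioi zero_le_one]
  have hd : ((finrank ℝ E - 1 : ℕ) : ℝ) = finrank ℝ E - 1 := by
    rw [Nat.cast_sub finrank_pos, Nat.cast_one]
  have hpow : ∀ {y : ℝ}, 0 < y → ∀ k : ℕ,
      y ^ (finrank ℝ E - 1) * y ^ k / y ^ q = y ^ ((finrank ℝ E : ℝ) - 1 + k - q) := by
    intro y hy k
    rw [Real.rpow_sub hy, Real.rpow_add hy, Real.rpow_natCast, ← hd, Real.rpow_natCast]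
  refine IntegrableOn.union ?_ ?_
  · rw [integrableOn_Ioc_iff_integrableOn_Ioo]
    refine ((intervalIntegral.integrableOn_Ioo_rpow_iff (s := (finrank ℝ E : ℝ) - 1 + (2 : ℕ) - q)
      one_pos).2 ?_).congr_fun (fun y hy ↦ ?_) measurableSet_Ioo
    · push_cast; linarith
    · beta_reduce
      rw [← hpow hy.1, smul_eq_mul, min_eq_right hy.2.le, mul_div_assoc]
  · refine (integrableOn_Ioi_rpow_of_lt (a := (finrank ℝ E : ℝ) - 1 + (0 : ℕ) - q) ?_
      one_pos).congr_fun (fun y (hy : 1 < y) ↦ ?_) measurableSet_Ioi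
    · push_cast; linarith
    · beta_reduce
      rw [← hpow (one_pos.trans hy), smul_eq_mul, min_eq_left hy.le, one_pow, pow_zero, mul_one,
        mul_one_div]

lemma lintegral_ball_norm_rpow_neg_lt_top {a : ℝ} (ha : a < finrank ℝ E) (r : ℝ) :
    ∫⁻ x in ball 0 r, ENNReal.ofReal (‖x‖ ^ (-a)) ∂μ < ∞ :=
  (integrableOn_ball_of_norm_le_rpow (μ := μ) finrank_pos (C := 1) ha
    (ae_of_all _ fun x ↦ by rw [one_mul, Real.norm_of_nonneg (by positivity)])
    (measurable_norm.pow_const _).aestronglyMeasurable).lintegral_lt_top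

end Finiteness

section Estimate

variable {n : ℕ} {s γ ρ β : ℝ}

lemma phiRhoSlope_rpow_le (hs : 0 < s) (hγ : 0 < γ) (hρ0 : 0 < ρ) (hρ1 : ρ < 1)
    (hργ : ρ ^ γ ≤ 1 / 2) (hβ0 : 0 ≤ β) (hβ : β ≤ 2 * s * γ) {x : Rn n} (hx : x ≠ 0) :
    phiRhoSlope n γ ρ x ^ (2 * s) ≤ (2 * γ) ^ (2 * s) * (ρ ^ β * ‖x‖ ^ (-(β + 2 * s))) := by
  by_cases hx1 : x ∈ ball 0 1
  swap
  · rw [phiRhoSlope, indicator_of_notMem hx1, Real.zero_rpow (by positivity)]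
    have := Real.rpow_nonneg (norm_nonneg x) (-(β + 2 * s))
    positivity
  set m := max ρ ‖x‖
  have hm : 0 < m := hρ0.trans_le (le_max_left _ _)
  have hA : ρ ^ γ / (1 - ρ ^ γ) ≤ 2 * ρ ^ γ := by
    rw [div_le_iff₀ (by linarith)]
    nlinarith [Real.rpow_pos_of_pos hρ0 γ]
  calc phiRhoSlope n γ ρ x ^ (2 * s)
      = (ρ ^ γ / (1 - ρ ^ γ) * γ * m ^ (-γ - 1)) ^ (2 * s) := by
        rw [phiRhoSlope, indicator_of_mem hx1]
    _ ≤ (2 * γ * (ρ ^ γ * m ^ (-γ - 1))) ^ (2 * s) := by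
        have := phiRho_coeff_pos hγ hρ0 hρ1
        refine Real.rpow_le_rpow (by positivity) ?_ (by positivity)
        calc ρ ^ γ / (1 - ρ ^ γ) * γ * m ^ (-γ - 1)
            ≤ 2 * ρ ^ γ * γ * m ^ (-γ - 1) := by gcongr
          _ = 2 * γ * (ρ ^ γ * m ^ (-γ - 1)) := by ring
    _ = (2 * γ) ^ (2 * s) * (ρ ^ (2 * s * γ) * m ^ (-(2 * s * γ + 2 * s))) := by
        rw [Real.mul_rpow (x := 2 * γ) (by positivity) (by positivity),
          Real.mul_rpow (x := ρ ^ γ) (by positivity) (by positivity), ← Real.rpow_mul hρ0.le,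
          ← Real.rpow_mul hm.le]
        ring_nf
    _ ≤ (2 * γ) ^ (2 * s) * (ρ ^ β * ‖x‖ ^ (-(β + 2 * s))) :=
        mul_le_mul_of_nonneg_left
          (rpow_mul_max_rpow_neg_le hρ0 (norm_pos_iff.2 hx) hβ (by positivity)) (by positivity)

lemma lintegral_phiRhoSlope_rpow_le [NeZero n] (hs : 0 < s) (hγ : 0 < γ) (hρ0 : 0 < ρ)
    (hρ1 : ρ < 1) (hργ : ρ ^ γ ≤ 1 / 2) (hβ0 : 0 ≤ β) (hβ : β ≤ 2 * s * γ) :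
    ∫⁻ x, ENNReal.ofReal (phiRhoSlope n γ ρ x ^ (2 * s))
      ≤ ENNReal.ofReal ((2 * γ) ^ (2 * s) * ρ ^ β)
        * ∫⁻ x in ball (0 : Rn n) 1, ENNReal.ofReal (‖x‖ ^ (-(β + 2 * s))) := by
  rw [← lintegral_indicator measurableSet_ball, ← lintegral_const_mul' _ _ ENNReal.ofReal_ne_top]
  refine lintegral_mono_ae ((Measure.ae_ne (volume : Measure (Rn n)) 0).mono fun x hx ↦ ?_)
  by_cases hx1 : x ∈ ball (0 : Rn n) 1
  · rw [indicator_of_mem hx1, ← ENNReal.ofReal_mul (by positivity), mul_assoc]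
    exact ENNReal.ofReal_le_ofReal (phiRhoSlope_rpow_le hs hγ hρ0 hρ1 hργ hβ0 hβ hx)
  · rw [phiRhoSlope, indicator_of_notMem hx1, Real.zero_rpow (by positivity),
      ENNReal.ofReal_zero]
    exact zero_le

lemma exists_gagEnergy_phiRho_le [NeZero n] (hs0 : 0 < s) (hs1 : s < 1) (hγ : 0 < γ) (c : ℝ)
    (Ω : Set (Rn n)) (hβ0 : 0 ≤ β) (hβ : β ≤ 2 * s * γ) (hβn : β + 2 * s < n) :
    ∃ C ≠ ∞, ∀ ρ ∈ Ioo (0 : ℝ) 1, ρ ^ γ ≤ 1 / 2 →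
      gagEnergy n s Ω (phiRho n γ c ρ) ≤ C * ENNReal.ofReal (ρ ^ β) := by
  have hd : Module.finrank ℝ (Rn n) = n := finrank_euclideanSpace_fin
  set M := ∫⁻ x in ball (0 : Rn n) 1, ENNReal.ofReal (‖x‖ ^ (-(β + 2 * s)))
  set I := ∫⁻ w : Rn n, ENNReal.ofReal (min 1 ‖w‖ ^ 2 / ‖w‖ ^ ((n : ℝ) + 2 * s))
  have hM : M ≠ ∞ := (lintegral_ball_norm_rpow_neg_lt_top volume (by rwa [hd]) 1).ne
  have hI : I ≠ ∞ :=
    (lintegral_min_one_norm_sq_div_rpow_lt_top volume (by rw [hd]; linarith)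
      (by rw [hd]; linarith)).ne
  refine ⟨2 * (ENNReal.ofReal ((2 * γ) ^ (2 * s)) * M) * I, by finiteness, ?_⟩
  rintro ρ ⟨hρ0, hρ1⟩ hργ
  calc gagEnergy n s Ω (phiRho n γ c ρ)
      ≤ ∫⁻ p : Rn n × Rn n, ENNReal.ofReal (|phiRho n γ c ρ p.1 - phiRho n γ c ρ p.2| ^ 2
          / ‖p.1 - p.2‖ ^ ((n : ℝ) + 2 * s)) := setLIntegral_le_lintegral _ _
    _ ≤ 2 * (∫⁻ x, ENNReal.ofReal (phiRhoSlope n γ ρ x ^ ((n + 2 * s) - Module.finrank ℝ (Rn n))))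
          * I := by
        rw [Measure.volume_eq_prod]
        exact lintegral_sq_div_rpow_le_of_abs_sub_le volume (by rw [hd]; linarith)
          (phiRhoSlope_nonneg hγ hρ0 hρ1)
          ((by fun_prop : Measurable _).indicator measurableSet_ball)
          fun x y hxy ↦ abs_phiRho_sub_le hγ hρ0 hρ1 hxy
    _ ≤ 2 * (ENNReal.ofReal ((2 * γ) ^ (2 * s) * ρ ^ β) * M) * I := by
        rw [hd, add_sub_cancel_left]
        gcongr
        exact lintegral_phiRhoSlope_rpow_le hs0 hγ hρ0 hρ1 hργ hβ0 hβ
    _ = 2 * (ENNReal.ofReal ((2 * γ) ^ (2 * s)) * M) * I * ENNReal.ofReal (ρ ^ β) := by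
        rw [ENNReal.ofReal_mul (by positivity)]
        ring

end Estimate

theorem statement18_general {n : ℕ} (hn : 3 ≤ n) {s : ℝ} (hs0 : 0 < s) (hs1 : s < 1)
    {γ : ℝ} (hγ : 0 < γ) (c : ℝ)
    {Ω : Set (Rn n)} :
    Filter.Tendsto (fun ρ : ℝ => gagEnergy n s Ω (phiRho n γ c ρ))
      (nhdsWithin 0 (Set.Ioo (0 : ℝ) 1)) (nhds 0) := by
  have : NeZero n := ⟨by omega⟩
  have hn3 : (3 : ℝ) ≤ n := by exact_mod_cast hn
  set β := min (2 * s * γ) ((n - 2 * s) / 2)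
  have hβ0 : 0 < β := lt_min (by positivity) (by linarith)
  have hβn : β + 2 * s < n := by linarith [min_le_right (2 * s * γ) ((n - 2 * s) / 2)]
  obtain ⟨C, hC, hbound⟩ :=
    exists_gagEnergy_phiRho_le hs0 hs1 hγ c Ω hβ0.le (min_le_left _ _) hβn
  have hρ_pow : ∀ {a : ℝ}, 0 < a → Tendsto (fun ρ : ℝ ↦ ρ ^ a) (𝓝[Ioo 0 1] 0) (𝓝 0) :=
    fun ha ↦ (tendsto_id.mono_left nhdsWithin_le_nhds).rpow_const_nhds_zero ha
  have hbound_near_zero : ∀ᶠ ρ in 𝓝[Ioo 0 1] 0,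
      gagEnergy n s Ω (phiRho n γ c ρ) ≤ C * ENNReal.ofReal (ρ ^ β) := by
    filter_upwards [self_mem_nhdsWithin, (hρ_pow hγ).eventually_le_const one_half_pos]
      with ρ hρ hργ using hbound ρ hρ hργ
  have hlim : Tendsto (fun ρ : ℝ ↦ C * ENNReal.ofReal (ρ ^ β)) (𝓝[Ioo 0 1] 0) (𝓝 0) := by
    simpa using ENNReal.Tendsto.const_mul (ENNReal.tendsto_ofReal (hρ_pow hβ0)) (.inr hC)
  exact tendsto_of_tendsto_of_tendsto_of_le_of_le' tendsto_const_nhds hlim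
    (.of_forall fun _ ↦ zero_le) hbound_near_zero

/-- for `n ≥ 3`, the Gagliardo energy of `φ_ρ` vanishes as `ρ → 0⁺`. -/
theorem statement18 {n : ℕ} (hn : 3 ≤ n) {s : ℝ} (hs0 : 0 < s) (hs1 : s < 1)
    {γ : ℝ} (hγ : 0 < γ) (c : ℝ)
    {Ω : Set (Rn n)} (hΩo : IsOpen Ω) (hΩb : Bornology.IsBounded Ω)
    (hB2 : Metric.ball (0 : Rn n) 2 ⊆ Ω) :
    Filter.Tendsto (fun ρ : ℝ => gagEnergy n s Ω (phiRho n γ c ρ))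
      (nhdsWithin 0 (Set.Ioo (0 : ℝ) 1)) (nhds 0) :=
  statement18_general hn hs0 hs1 hγ c
end
end
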